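/- Let π: V₁ → V₂ be a surjective linear map between finite-dimensional real vector spaces and F₁ a Minkowski norm on V₁. Let ν(π)₀ denote the set of nonzero vectors of V₁ that are F₁-orthogonal to the kernel of π. Then the restriction φ = π|_{ν(π)₀}: ν(π)₀ → V₂ \ {0} is a bijection. -/

import Mathlib

/-- The fundamental tensor of a function `F`:
`g_v(u,w) = (1/2) ∂²/∂t∂s F²(v+tu+sw)|_{t=s=0}`. -/
noncomputable def fundTensor {V : Type*} [NormedAddCommGroup V] [NormedSpace ℝ V]
    (F : V → ℝ) (v u w : V) : ℝ :=
  (1 / 2) * deriv (fun t : ℝ => deriv (fun s : ℝ => (F (v + t • u + s • w)) ^ 2) 0) 0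

/-- A Minkowski norm on a real vector space. -/
structure IsMinkowskiNorm {V : Type*} [NormedAddCommGroup V] [NormedSpace ℝ V]
    (F : V → ℝ) : Prop where
  nonneg : ∀ v, 0 ≤ F v
  smooth : ContDiffOn ℝ (⊤ : ℕ∞) F {(0 : V)}ᶜ
  homog : ∀ l : ℝ, 0 < l → ∀ v, F (l • v) = l * F v
  symm : ∀ v : V, v ≠ 0 → ∀ u w, fundTensor F v u w = fundTensor F v w u
  posdef : ∀ v : V, v ≠ 0 → ∀ u : V, u ≠ 0 → 0 < fundTensor F v u u

section Helpers
variable {V : Type*} [NormedAddCommGroup V] [NormedSpace ℝ V] {F : V → ℝ}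

namespace MinkAux

/-- `E = F²`. -/
def En (F : V → ℝ) : V → ℝ := fun x => F x ^ 2

lemma F_zero (hF : IsMinkowskiNorm F) : F 0 = 0 := by
  have h := hF.homog 2 (by norm_num) 0
  rw [smul_zero] at h; linarith

lemma En_homog (hF : IsMinkowskiNorm F) {l : ℝ} (hl : 0 < l) (v : V) :
    En F (l • v) = l ^ 2 * En F v := by
  simp only [En, hF.homog l hl v]; ring

lemma En_smooth (hF : IsMinkowskiNorm F) : ContDiffOn ℝ (⊤ : ℕ∞) (En F) {(0 : V)}ᶜ :=
  (hF.smooth.of_le (by exact_mod_cast le_top)).pow 2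

lemma En_diffAt (hF : IsMinkowskiNorm F) {v : V} (hv : v ≠ 0) :
    DifferentiableAt ℝ (En F) v :=
  ((En_smooth hF).contDiffAt (isOpen_compl_singleton.mem_nhds hv)).differentiableAt
    (by simp)

/-- derivative of `E` along a line. -/
lemma hasDerivAt_line (hF : IsMinkowskiNorm F) {z u : V} {t : ℝ} (hz : z + t • u ≠ 0) :
    HasDerivAt (fun s : ℝ => En F (z + s • u)) (fderiv ℝ (En F) (z + t • u) u) t := by
  have hline : HasDerivAt (fun s : ℝ => z + s • u) u t := by
    simpa using ((hasDerivAt_id t).smul_const u).const_add z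
  exact (En_diffAt hF hz).hasFDerivAt.comp_hasDerivAt t hline

/-- scaling of the derivative of `E`. -/
lemma fderiv_En_smul (hF : IsMinkowskiNorm F) {v : V} (hv : v ≠ 0) {c : ℝ} (hc : 0 < c) :
    fderiv ℝ (En F) (c • v) = c • fderiv ℝ (En F) v := by
  have hcv : c • v ≠ 0 := smul_ne_zero hc.ne' hv
  have hE := (En_diffAt hF hcv).hasFDerivAt
  have hL : HasFDerivAt (fun x : V => c • x) (c • ContinuousLinearMap.id ℝ V) v := by
    exact ((ContinuousLinearMap.id ℝ V).hasFDerivAt (x := v)).const_smul c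
  have h1 : HasFDerivAt (fun x => En F (c • x))
      ((fderiv ℝ (En F) (c • v)).comp (c • ContinuousLinearMap.id ℝ V)) v := hE.comp v hL
  have hfun : (fun x => En F (c • x)) = fun x => c ^ 2 * En F x := by
    funext x; exact En_homog hF hc x
  have h2 : HasFDerivAt (fun x => En F (c • x)) ((c ^ 2) • fderiv ℝ (En F) v) v := by
    rw [hfun]
    exact (En_diffAt hF hv).hasFDerivAt.const_mul (c ^ 2)
  have h := h1.unique h2
  ext u
  have := DFunLike.congr_fun h u
  simp only [ContinuousLinearMap.coe_comp', Function.comp_apply,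
    ContinuousLinearMap.coe_smul', Pi.smul_apply, ContinuousLinearMap.coe_id', id_eq,
    map_smul, smul_eq_mul] at this ⊢
  have hc' : c ≠ 0 := hc.ne'
  nlinarith [this]

/-- Euler identity. -/
lemma euler (hF : IsMinkowskiNorm F) {v : V} (hv : v ≠ 0) :
    fderiv ℝ (En F) v v = 2 * En F v := by
  have hs : HasDerivAt (fun l : ℝ => l • v) v 1 := by
    simpa using (hasDerivAt_id (1 : ℝ)).smul_const v
  have hE : HasFDerivAt (En F) (fderiv ℝ (En F) v) ((1 : ℝ) • v) := by
    rw [one_smul]; exact (En_diffAt hF hv).hasFDerivAt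
  have h1 : HasDerivAt (fun l : ℝ => En F (l • v)) (fderiv ℝ (En F) v v) 1 := by
    exact hE.comp_hasDerivAt 1 hs
  have h2 : HasDerivAt (fun l : ℝ => l ^ 2 * En F v) (2 * En F v) 1 := by
    simpa using (hasDerivAt_pow 2 (1 : ℝ)).mul_const (En F v)
  have heq : (fun l : ℝ => En F (l • v)) =ᶠ[nhds 1] fun l => l ^ 2 * En F v := by
    filter_upwards [eventually_gt_nhds zero_lt_one] with l hl using En_homog hF hl v
  exact h1.unique (h2.congr_of_eventuallyEq heq)

/-- the key identity `g_v(v,u) = ½ DE(v)(u)`. -/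
lemma fundTensor_eq (hF : IsMinkowskiNorm F) {v : V} (hv : v ≠ 0) (u : V) :
    fundTensor F v v u = (1 / 2) * fderiv ℝ (En F) v u := by
  have key : (fun t : ℝ => deriv (fun s : ℝ => En F (v + t • v + s • u)) 0)
      =ᶠ[nhds 0] fun t => (1 + t) * fderiv ℝ (En F) v u := by
    filter_upwards [eventually_gt_nhds (by norm_num : (-1 : ℝ) < 0)] with t ht
    have h1t : (0 : ℝ) < 1 + t := by linarith
    have hzv : v + t • v = (1 + t) • v := by rw [add_smul, one_smul]
    have hz : (1 + t) • v + (0 : ℝ) • u ≠ 0 := by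
      simpa using smul_ne_zero h1t.ne' hv
    have hd := (hasDerivAt_line hF hz).deriv
    rw [hzv, hd]
    simp only [zero_smul, add_zero]
    rw [fderiv_En_smul hF hv h1t]
    simp [smul_eq_mul]
  have houter : deriv (fun t : ℝ => (1 + t) * fderiv ℝ (En F) v u) 0
      = fderiv ℝ (En F) v u := by
    have : HasDerivAt (fun t : ℝ => (1 + t) * fderiv ℝ (En F) v u)
        (fderiv ℝ (En F) v u) 0 := by
      simpa using ((hasDerivAt_id (0 : ℝ)).const_add 1).mul_const (fderiv ℝ (En F) v u)
    exact this.deriv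
  show (1 / 2) * deriv (fun t : ℝ => deriv (fun s : ℝ => En F (v + t • v + s • u)) 0) 0 = _
  rw [key.deriv_eq, houter]

lemma En_pos (hF : IsMinkowskiNorm F) {v : V} (hv : v ≠ 0) : 0 < En F v := by
  have h := hF.posdef v hv v hv
  rw [fundTensor_eq hF hv v, euler hF hv] at h
  linarith

end MinkAux
end Helpers

/-- The restriction of a surjective linear map `π` to the set of nonzero vectors
`F₁`-orthogonal to `ker π` is a bijection onto `V₂ \ {0}`. -/
theorem orthogonal_restriction_bijOn {V₁ V₂ : Type*}
    [NormedAddCommGroup V₁] [NormedSpace ℝ V₁] [FiniteDimensional ℝ V₁]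
    [NormedAddCommGroup V₂] [NormedSpace ℝ V₂] [FiniteDimensional ℝ V₂]
    (π : V₁ →ₗ[ℝ] V₂) (hπ : Function.Surjective π)
    (F₁ : V₁ → ℝ) (hF₁ : IsMinkowskiNorm F₁) :
    Set.BijOn π {v : V₁ | v ≠ 0 ∧ ∀ u ∈ LinearMap.ker π, fundTensor F₁ v v u = 0}
      {w : V₂ | w ≠ 0} := by
  open MinkAux in
  have not_ker : ∀ v : V₁, v ≠ 0 → (∀ u ∈ LinearMap.ker π, fundTensor F₁ v v u = 0) →
      π v ≠ 0 := by
    intro v hv1 hv2 h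
    have h0 := hv2 v (LinearMap.mem_ker.2 h)
    rw [fundTensor_eq hF₁ hv1 v, euler hF₁ hv1] at h0
    have := En_pos hF₁ hv1
    linarith
  refine ⟨fun v hv => not_ker v hv.1 hv.2, ?_, ?_⟩
  · -- injectivity
    intro v₁ hv₁ v₂ hv₂ heq
    by_contra hne
    set k := v₁ - v₂ with hk
    have hk0 : k ≠ 0 := sub_ne_zero.2 hne
    have hπk : π k = 0 := by simp [hk, map_sub, heq]
    have hct : ∀ t : ℝ, v₂ + t • k ≠ 0 := by
      intro t h
      apply not_ker v₂ hv₂.1 hv₂.2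
      have h2 := congrArg π h
      simpa [map_add, map_smul, hπk] using h2
    set φ : ℝ → ℝ := fun t => En F₁ (v₂ + t • k) with hφdef
    have hφc : ContDiff ℝ (⊤ : ℕ∞) φ := by
      rw [contDiff_iff_contDiffAt]
      intro t
      have h1 : ContDiffAt ℝ (⊤ : ℕ∞) (En F₁) (v₂ + t • k) :=
        (En_smooth hF₁).contDiffAt (isOpen_compl_singleton.mem_nhds (hct t))
      have h2 : ContDiffAt ℝ (⊤ : ℕ∞) (fun t : ℝ => v₂ + t • k) t := by fun_prop
      exact h1.comp t h2
    obtain ⟨hφd, hφ'⟩ := contDiff_infty_iff_deriv.1 hφc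
    have hφ'd : Differentiable ℝ (deriv φ) := (contDiff_infty_iff_deriv.1 hφ').1
    have hderiv : ∀ t : ℝ, deriv φ t = fderiv ℝ (En F₁) (v₂ + t • k) k := fun t =>
      (hasDerivAt_line hF₁ (hct t)).deriv
    have hsecond : ∀ t : ℝ, deriv (deriv φ) t = 2 * fundTensor F₁ (v₂ + t • k) k k := by
      intro t
      have hre : (fun a : ℝ => deriv (fun s : ℝ => En F₁ ((v₂ + t • k) + a • k + s • k)) 0)
          = fun a => deriv φ (t + a) := by
        funext a
        have h1 : (fun s : ℝ => En F₁ ((v₂ + t • k) + a • k + s • k))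
            = fun s => φ ((t + a) + s) := by
          funext s
          show En F₁ _ = En F₁ _
          congr 1
          simp only [add_smul]
          abel
        rw [h1, deriv_comp_const_add]
        norm_num
      have key : fundTensor F₁ (v₂ + t • k) k k = (1 / 2) * deriv (deriv φ) t := by
        show (1 / 2) * deriv
          (fun a : ℝ => deriv (fun s : ℝ => En F₁ ((v₂ + t • k) + a • k + s • k)) 0) 0 = _
        rw [hre, deriv_comp_const_add (deriv φ) t 0]
        norm_num
      rw [key]; ring
    have hpos : ∀ t : ℝ, 0 < deriv (deriv φ) t := by
      intro t
      rw [hsecond t]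
      have := hF₁.posdef _ (hct t) k hk0
      linarith
    have hmono : StrictMonoOn (deriv φ) (Set.Icc 0 1) :=
      strictMonoOn_of_deriv_pos (convex_Icc 0 1) hφ'd.continuous.continuousOn
        (fun t _ => hpos t)
    have h01 : deriv φ 0 < deriv φ 1 :=
      hmono (Set.left_mem_Icc.2 zero_le_one) (Set.right_mem_Icc.2 zero_le_one) zero_lt_one
    have e0 : deriv φ 0 = 0 := by
      rw [hderiv 0]
      have h2 := hv₂.2 k (LinearMap.mem_ker.2 hπk)
      rw [fundTensor_eq hF₁ hv₂.1 k] at h2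
      simp only [zero_smul, add_zero]
      linarith
    have e1 : deriv φ 1 = 0 := by
      rw [hderiv 1]
      have h1 : v₂ + (1 : ℝ) • k = v₁ := by simp [hk]
      rw [h1]
      have h2 := hv₁.2 k (LinearMap.mem_ker.2 hπk)
      rw [fundTensor_eq hF₁ hv₁.1 k] at h2
      linarith
    linarith
  · -- surjectivity
    intro w hw
    have hw0 : w ≠ 0 := hw
    obtain ⟨x₀, hx₀⟩ := hπ w
    have hx₀0 : x₀ ≠ 0 := by
      rintro rfl
      rw [map_zero] at hx₀
      exact hw0 hx₀.symm
    have hπcont : Continuous π := π.continuous_of_finiteDimensional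
    have hAclosed : IsClosed {x : V₁ | π x = w} := isClosed_eq hπcont continuous_const
    have hA0 : ∀ x ∈ {x : V₁ | π x = w}, x ≠ 0 := by
      rintro x hx rfl
      rw [Set.mem_setOf_eq, map_zero] at hx
      exact hw0 hx.symm
    have hcontE : ContinuousOn (En F₁) {(0 : V₁)}ᶜ := (En_smooth hF₁).continuousOn
    -- minimum of En on the unit sphere
    have hsne : (Metric.sphere (0 : V₁) 1).Nonempty := by
      refine ⟨‖x₀‖⁻¹ • x₀, ?_⟩
      have : ‖x₀‖ ≠ 0 := norm_ne_zero_iff.2 hx₀0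
      simp [norm_smul, abs_of_nonneg (inv_nonneg.2 (norm_nonneg x₀)), inv_mul_cancel₀ this]
    have hssub : Metric.sphere (0 : V₁) 1 ⊆ {(0 : V₁)}ᶜ := by
      intro x hx
      simp only [Metric.mem_sphere, dist_zero_right] at hx
      simp only [Set.mem_compl_iff, Set.mem_singleton_iff]
      intro h; rw [h] at hx; simp at hx
    obtain ⟨m, hm, hmmin⟩ := (isCompact_sphere (0 : V₁) 1).exists_isMinOn hsne
      (hcontE.mono hssub)
    set c := En F₁ m with hcdef
    have hc : 0 < c := En_pos hF₁ (hssub hm)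
    have hcoer : ∀ x : V₁, c * ‖x‖ ^ 2 ≤ En F₁ x := by
      intro x
      rcases eq_or_ne x 0 with rfl | hx
      · simp [En, F_zero hF₁]
      · have hnx : 0 < ‖x‖ := norm_pos_iff.2 hx
        have hu : ‖x‖⁻¹ • x ∈ Metric.sphere (0 : V₁) 1 := by
          simp [norm_smul, abs_of_nonneg (inv_nonneg.2 (norm_nonneg x)),
            inv_mul_cancel₀ hnx.ne']
        have h1 : En F₁ x = ‖x‖ ^ 2 * En F₁ (‖x‖⁻¹ • x) := by
          have h2 := En_homog hF₁ hnx (‖x‖⁻¹ • x)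
          rw [smul_smul, mul_inv_cancel₀ hnx.ne', one_smul] at h2
          exact h2
        have h2 : c ≤ En F₁ (‖x‖⁻¹ • x) := isMinOn_iff.1 hmmin _ hu
        nlinarith [norm_nonneg x]
    set R := Real.sqrt (En F₁ x₀ / c) + ‖x₀‖ + 1 with hRdef
    have hsqnn : 0 ≤ Real.sqrt (En F₁ x₀ / c) := Real.sqrt_nonneg _
    have hsq : Real.sqrt (En F₁ x₀ / c) ^ 2 = En F₁ x₀ / c :=
      Real.sq_sqrt (div_nonneg (sq_nonneg _) hc.le)
    have hRx₀ : ‖x₀‖ ≤ R := by rw [hRdef]; linarith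
    have hK : IsCompact ({x : V₁ | π x = w} ∩ Metric.closedBall 0 R) :=
      (isCompact_closedBall 0 R).inter_left hAclosed
    have hKne : ({x : V₁ | π x = w} ∩ Metric.closedBall 0 R).Nonempty :=
      ⟨x₀, hx₀, by simpa [Metric.mem_closedBall, dist_zero_right] using hRx₀⟩
    have hKsub : {x : V₁ | π x = w} ∩ Metric.closedBall 0 R ⊆ {(0 : V₁)}ᶜ :=
      fun x hx => hA0 x hx.1
    obtain ⟨v, hvK, hvmin⟩ := hK.exists_isMinOn hKne (hcontE.mono hKsub)
    have hv0 : v ≠ 0 := hKsub hvK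
    have hEv : En F₁ v ≤ En F₁ x₀ := isMinOn_iff.1 hvmin _
      ⟨hx₀, by simpa [Metric.mem_closedBall, dist_zero_right] using hRx₀⟩
    have hvR : ‖v‖ < R := by
      have h1 := hcoer v
      have h2 : En F₁ x₀ = c * Real.sqrt (En F₁ x₀ / c) ^ 2 := by
        rw [hsq]; field_simp
      by_contra hcon
      push_neg at hcon
      set s := Real.sqrt (En F₁ x₀ / c) with hs
      have h3 : s + 1 ≤ ‖v‖ := by
        have := norm_nonneg x₀
        rw [hRdef] at hcon
        linarith
      have h4 : (s + 1) ^ 2 ≤ ‖v‖ ^ 2 := by nlinarith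
      nlinarith
    refine ⟨v, ⟨hv0, ?_⟩, hvK.1⟩
    intro u hu
    have hπu : π u = 0 := LinearMap.mem_ker.1 hu
    have hloc : IsLocalMin (fun t : ℝ => En F₁ (v + t • u)) 0 := by
      have hcont : ContinuousAt (fun t : ℝ => ‖v + t • u‖) 0 := by fun_prop
      have hev : ∀ᶠ t : ℝ in nhds 0, ‖v + t • u‖ < R := by
        have h0 : ContinuousAt (fun t : ℝ => ‖v + t • u‖) 0 := hcont
        have h1 : Filter.Tendsto (fun t : ℝ => ‖v + t • u‖) (nhds 0) (nhds ‖v‖) := by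
          have := h0.tendsto
          simpa using this
        exact h1.eventually_lt_const hvR
      filter_upwards [hev] with t ht
      have hmem : v + t • u ∈ {x : V₁ | π x = w} ∩ Metric.closedBall 0 R := by
        constructor
        · show π (v + t • u) = w
          rw [map_add, map_smul, hπu, smul_zero, add_zero]
          exact hvK.1
        · simpa [Metric.mem_closedBall, dist_zero_right] using ht.le
      have := isMinOn_iff.1 hvmin _ hmem
      simpa using this
    have hz : v + (0 : ℝ) • u ≠ 0 := by simpa using hv0
    have hd0 : deriv (fun t : ℝ => En F₁ (v + t • u)) 0 = fderiv ℝ (En F₁) v u := by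
      rw [(hasDerivAt_line hF₁ hz).deriv]
      simp
    have h0 := hloc.deriv_eq_zero
    rw [hd0] at h0
    rw [fundTensor_eq hF₁ hv0 u, h0]
    ring
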